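/- arXiv:2201.06787 — 2 statements merged into one kernel-verified Lean document; each statement's English description precedes it below -/
import Mathlib

section
/- For the Adams-Bashforth coefficients γ_{ℓν} := ((-1)^{ν-1}/((ν-1)!(ℓ-ν)!)) ∫₀¹ ∏_{j=1, j≠ν}^{ℓ} (u+j-1) du, the sum of absolute values satisfies ∑_{ν=1}^{ℓ} |γ_{ℓν}| ≤ ℓ·2^{ℓ-1} for every ℓ ≥ 1. -/
open scoped BigOperators

/-- Adams-Bashforth coefficients
`γ_{ℓν} = ((-1)^{ν-1}/((ν-1)!(ℓ-ν)!)) ∫₀¹ ∏_{j=1, j≠ν}^{ℓ} (u+j-1) du`. -/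
noncomputable def adamsBashforthCoeff (ℓ ν : ℕ) : ℝ :=
  ((-1 : ℝ) ^ (ν - 1) / ((Nat.factorial (ν - 1)) * (Nat.factorial (ℓ - ν)))) *
    ∫ u in (0:ℝ)..1, ∏ j ∈ (Finset.Icc 1 ℓ).erase ν, (u + (j : ℝ) - 1)

/-!
On `[0, 1]` each factor satisfies `|u + j - 1| ≤ j`, so the integral defining `γ_{ℓν}` is at most
`∏_{j ≠ ν} j = ℓ! / ν` in absolute value, whence `|γ_{ℓν}| ≤ C(ℓ, ν) ≤ ν C(ℓ, ν)`. Summing and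
using `∑_ν ν C(ℓ, ν) = ℓ 2^{ℓ-1}` gives the bound.
-/

open Finset Nat

lemma prod_Icc_one_id_eq_factorial (n : ℕ) : ∏ j ∈ Icc 1 n, j = n ! := by
  rw [← Ico_add_one_right_eq_Icc, prod_Ico_id_eq_factorial]

lemma prod_erase_Icc_one_id_eq {ℓ ν : ℕ} (h1 : 1 ≤ ν) (h2 : ν ≤ ℓ) :
    ∏ j ∈ (Icc 1 ℓ).erase ν, j = ℓ.choose ν * ((ν - 1)! * (ℓ - ν)!) := by
  apply Nat.eq_of_mul_eq_mul_left h1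
  rw [mul_prod_erase _ (fun j => j) (mem_Icc.mpr ⟨h1, h2⟩), prod_Icc_one_id_eq_factorial,
    ← choose_mul_factorial_mul_factorial h2, ← mul_factorial_pred (by omega : ν ≠ 0)]
  ring

lemma abs_prod_add_sub_one_le {s : Finset ℕ} (hs : ∀ j ∈ s, 1 ≤ j) {u : ℝ}
    (hu0 : 0 ≤ u) (hu1 : u ≤ 1) : |∏ j ∈ s, (u + (j : ℝ) - 1)| ≤ ∏ j ∈ s, (j : ℝ) := by
  rw [abs_prod]
  refine prod_le_prod (fun _ _ => abs_nonneg _) fun j hj => ?_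
  have hj1 : (1 : ℝ) ≤ j := by exact_mod_cast hs j hj
  rw [abs_of_nonneg (by linarith)]
  linarith

lemma abs_integral_prod_add_sub_one_le {s : Finset ℕ} (hs : ∀ j ∈ s, 1 ≤ j) :
    |∫ u in (0:ℝ)..1, ∏ j ∈ s, (u + (j : ℝ) - 1)| ≤ ∏ j ∈ s, (j : ℝ) := by
  have h := intervalIntegral.norm_integral_le_of_norm_le_const
    (f := fun u : ℝ => ∏ j ∈ s, (u + (j : ℝ) - 1)) (a := 0) (b := 1) fun u hu => by
      rw [Set.uIoc_of_le zero_le_one] at hu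
      exact abs_prod_add_sub_one_le hs hu.1.le hu.2
  simpa using h

lemma abs_adamsBashforthCoeff_le_choose {ℓ ν : ℕ} (h1 : 1 ≤ ν) (h2 : ν ≤ ℓ) :
    |adamsBashforthCoeff ℓ ν| ≤ ℓ.choose ν := by
  have hden : (0 : ℝ) < (ν - 1)! * (ℓ - ν)! := by positivity
  have hint := abs_integral_prod_add_sub_one_le
    (s := (Icc 1 ℓ).erase ν) fun j hj => (mem_Icc.mp (mem_of_mem_erase hj)).1
  rw [← Nat.cast_prod, prod_erase_Icc_one_id_eq h1 h2] at hint
  push_cast at hint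
  rw [adamsBashforthCoeff, abs_mul, abs_div, abs_pow, abs_neg, abs_one, one_pow,
    abs_of_pos hden, one_div_mul_eq_div, div_le_iff₀ hden]
  exact hint

lemma sum_Icc_one_choose_le (ℓ : ℕ) : ∑ ν ∈ Icc 1 ℓ, ℓ.choose ν ≤ ℓ * 2 ^ (ℓ - 1) :=
  calc ∑ ν ∈ Icc 1 ℓ, ℓ.choose ν
      ≤ ∑ ν ∈ Icc 1 ℓ, ν * ℓ.choose ν :=
        sum_le_sum fun ν hν => Nat.le_mul_of_pos_left _ (mem_Icc.mp hν).1
    _ ≤ ∑ ν ∈ range (ℓ + 1), ν * ℓ.choose ν :=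
        sum_le_sum_of_subset fun ν hν => by simp only [mem_Icc, mem_range] at hν ⊢; omega
    _ = ℓ * 2 ^ (ℓ - 1) := sum_range_mul_choose ℓ

theorem sum_abs_adamsBashforthCoeff_le_general (ℓ : ℕ) :
    ∑ ν ∈ Finset.Icc 1 ℓ, |adamsBashforthCoeff ℓ ν| ≤ (ℓ : ℝ) * 2 ^ (ℓ - 1) :=
  calc ∑ ν ∈ Icc 1 ℓ, |adamsBashforthCoeff ℓ ν|
      ≤ ∑ ν ∈ Icc 1 ℓ, (ℓ.choose ν : ℝ) := sum_le_sum fun ν hν =>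
        abs_adamsBashforthCoeff_le_choose (mem_Icc.mp hν).1 (mem_Icc.mp hν).2
    _ ≤ (ℓ : ℝ) * 2 ^ (ℓ - 1) := by exact_mod_cast sum_Icc_one_choose_le ℓ

theorem sum_abs_adamsBashforthCoeff_le (ℓ : ℕ) (hℓ : 1 ≤ ℓ) :
    ∑ ν ∈ Finset.Icc 1 ℓ, |adamsBashforthCoeff ℓ ν| ≤ (ℓ : ℝ) * 2 ^ (ℓ - 1) :=
  sum_abs_adamsBashforthCoeff_le_general ℓ
end

section
/- For the Adams-Moulton coefficients β_{ℓν} := ((-1)^ν/(ν!(ℓ-ν)!)) ∫₀¹ ∏_{j=0, j≠ν}^{ℓ} (u+j-1) du, the sum of absolute values satisfies ∑_{ν=0}^{ℓ} |β_{ℓν}| ≤ 2^{ℓ} for every ℓ ≥ 0. -/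
open scoped BigOperators

/-- Adams-Moulton coefficients
`β_{ℓν} = ((-1)^ν/(ν!(ℓ-ν)!)) ∫₀¹ ∏_{j=0, j≠ν}^{ℓ} (u+j-1) du`. -/
noncomputable def adamsMoultonCoeff (ℓ ν : ℕ) : ℝ :=
  ((-1 : ℝ) ^ ν / ((Nat.factorial ν) * (Nat.factorial (ℓ - ν)))) *
    ∫ u in (0:ℝ)..1, ∏ j ∈ (Finset.range (ℓ + 1)).erase ν, (u + (j : ℝ) - 1)

/-! Each factor `u + j - 1` with `u ∈ [0, 1]` is at most `max j 1` in absolute value, and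
`∏_{j ≤ ℓ} max j 1 = ℓ!`. Hence the integral in `β_{ℓν}` is at most `ℓ!` in absolute value,
so `|β_{ℓν}| ≤ ℓ! / (ν! (ℓ-ν)!) = (ℓ choose ν)`, and summing over `ν` gives `2^ℓ`. -/

open Finset

lemma prod_range_succ_max_one (n : ℕ) : ∏ j ∈ range (n + 1), max j 1 = n.factorial := by
  induction n with
  | zero => simp
  | succ n ih =>
    rw [prod_range_succ, ih, max_eq_left (by omega), Nat.factorial_succ, mul_comm]

lemma abs_add_natCast_sub_one_le {u : ℝ} (hu : u ∈ Set.Icc (0 : ℝ) 1) (j : ℕ) :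
    |u + j - 1| ≤ (max j 1 : ℕ) := by
  obtain ⟨hu0, hu1⟩ := hu
  rcases Nat.eq_zero_or_pos j with rfl | hj
  · simp only [Nat.cast_zero, add_zero, Nat.zero_max, Nat.cast_one]
    rw [abs_of_nonpos (by linarith)]
    linarith
  · have hj' : (1 : ℝ) ≤ j := by exact_mod_cast hj
    rw [max_eq_left hj, abs_of_nonneg (by linarith)]
    linarith

lemma abs_prod_add_natCast_sub_one_le_factorial {s : Finset ℕ} {n : ℕ}
    (hs : s ⊆ range (n + 1)) {u : ℝ} (hu : u ∈ Set.Icc (0 : ℝ) 1) :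
    |∏ j ∈ s, (u + (j : ℝ) - 1)| ≤ n.factorial := by
  have hmax : ∏ j ∈ s, max j 1 ≤ n.factorial := by
    rw [← prod_range_succ_max_one n]
    exact prod_le_prod_of_subset_of_one_le' hs fun i _ _ => le_max_right i 1
  calc |∏ j ∈ s, (u + (j : ℝ) - 1)|
      = ∏ j ∈ s, |u + (j : ℝ) - 1| := abs_prod _ _
    _ ≤ ∏ j ∈ s, ((max j 1 : ℕ) : ℝ) :=
        prod_le_prod (fun _ _ => abs_nonneg _) fun j _ => abs_add_natCast_sub_one_le hu j
    _ ≤ n.factorial := by exact_mod_cast hmax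

lemma abs_integral_prod_add_natCast_sub_one_le_factorial {s : Finset ℕ} {n : ℕ}
    (hs : s ⊆ range (n + 1)) :
    |∫ u in (0 : ℝ)..1, ∏ j ∈ s, (u + (j : ℝ) - 1)| ≤ n.factorial := by
  have h := intervalIntegral.norm_integral_le_of_norm_le_const (a := (0 : ℝ)) (b := 1)
    (f := fun u => ∏ j ∈ s, (u + (j : ℝ) - 1)) fun u hu =>
      abs_prod_add_natCast_sub_one_le_factorial hs (Set.Ioc_subset_Icc_self
        (by rwa [Set.uIoc_of_le zero_le_one] at hu))
  simpa using h

lemma abs_adamsMoultonCoeff_le_choose {ℓ ν : ℕ} (hν : ν ≤ ℓ) :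
    |adamsMoultonCoeff ℓ ν| ≤ ℓ.choose ν := by
  have hpos : (0 : ℝ) < ν.factorial * (ℓ - ν).factorial := by positivity
  have hchoose : (ℓ.choose ν : ℝ) = ℓ.factorial / (ν.factorial * (ℓ - ν).factorial) := by
    rw [Nat.choose_eq_factorial_div_factorial hν,
      Nat.cast_div (Nat.factorial_mul_factorial_dvd_factorial hν) (by positivity), Nat.cast_mul]
  rw [adamsMoultonCoeff, abs_mul, abs_div, abs_pow, abs_neg, abs_one, one_pow, abs_of_pos hpos,
    hchoose, one_div_mul_eq_div]
  gcongr
  exact abs_integral_prod_add_natCast_sub_one_le_factorial (erase_subset _ _)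

theorem sum_abs_adamsMoultonCoeff_le (ℓ : ℕ) :
    ∑ ν ∈ Finset.range (ℓ + 1), |adamsMoultonCoeff ℓ ν| ≤ (2 : ℝ) ^ ℓ := by
  calc ∑ ν ∈ range (ℓ + 1), |adamsMoultonCoeff ℓ ν|
      ≤ ∑ ν ∈ range (ℓ + 1), (ℓ.choose ν : ℝ) :=
        sum_le_sum fun ν hν => abs_adamsMoultonCoeff_le_choose (by grind)
    _ = 2 ^ ℓ := by exact_mod_cast Nat.sum_range_choose ℓ
end
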